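/- arXiv:1707.04246 — 2 statements merged into one kernel-verified Lean document; each statement's English description precedes it below -/
import Mathlib

section
/- Let β = ‖C₀‖·‖A‖·‖(Γ + AC₀A*)⁻¹‖·‖M‖. Then for every δ ≥ 0 and all bounded self-adjoint non-negative operators B₁, B₂ : X → X, the map F satisfies the Lipschitz estimate ‖F(B₁,δ) − F(B₂,δ)‖ ≤ (βδ)² ‖B₁ − B₂‖ in the operator norm; in particular, for δ < 1/β the map B ↦ F(B,δ) is a contraction on the set of bounded self-adjoint non-negative operators on X. -/
/-!
Write `S = Γ + A C₀ A*` and `Tᵢ = Γ + δ² M Bᵢ M* + A C₀ A*`. Then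
`F(B₁,δ) − F(B₂,δ) = C₀ A* (T₂⁻¹ − T₁⁻¹) A C₀`, and the resolvent identity
`T₂⁻¹ − T₁⁻¹ = δ² T₂⁻¹ M (B₁ − B₂) M* T₁⁻¹` reduces the estimate to `‖Tᵢ⁻¹‖ ≤ ‖S⁻¹‖`.
That holds because `S ≤ Tᵢ` in the Loewner order and a positive invertible `S` is coercive,
`‖x‖² ≤ ‖S⁻¹‖ ⟪S x, x⟫` (Cauchy–Schwarz for the form `⟪S ·, ·⟫`), so that
`‖x‖² ≤ ‖S⁻¹‖ ⟪Tᵢ x, x⟫ ≤ ‖S⁻¹‖ ‖Tᵢ x‖ ‖x‖`.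
-/
open ContinuousLinearMap
open scoped RealInnerProductSpace

/-- The map `F(B,δ) = C₀ − C₀ A* (Γ + δ² M B M* + A C₀ A*)⁻¹ A C₀`. -/
noncomputable def Fop {X Y : Type*}
    [NormedAddCommGroup X] [InnerProductSpace ℝ X] [CompleteSpace X]
    [NormedAddCommGroup Y] [InnerProductSpace ℝ Y] [FiniteDimensional ℝ Y]
    (A M : X →L[ℝ] Y) (C₀ : X →L[ℝ] X) (Γ : Y →L[ℝ] Y)
    (B : X →L[ℝ] X) (δ : ℝ) : X →L[ℝ] X :=
  C₀ - (C₀ ∘L (adjoint A) ∘L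
    Ring.inverse (Γ + δ ^ 2 • (M ∘L B ∘L adjoint M) + A ∘L C₀ ∘L adjoint A)) ∘L A ∘L C₀

namespace ContinuousLinearMap

section Composition

variable {𝕜 E F G H : Type*} [NontriviallyNormedField 𝕜] [NormedAddCommGroup E]
  [NormedAddCommGroup F] [NormedAddCommGroup G] [NormedAddCommGroup H] [NormedSpace 𝕜 E]
  [NormedSpace 𝕜 F] [NormedSpace 𝕜 G] [NormedSpace 𝕜 H]

theorem opNorm_comp_comp_le (f : G →L[𝕜] H) (g : F →L[𝕜] G) (h : E →L[𝕜] F) :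
    ‖f ∘L g ∘L h‖ ≤ ‖f‖ * ‖g‖ * ‖h‖ :=
  calc ‖f ∘L g ∘L h‖ ≤ ‖f‖ * ‖g ∘L h‖ := opNorm_comp_le _ _
    _ ≤ ‖f‖ * (‖g‖ * ‖h‖) := by gcongr; exact opNorm_comp_le _ _
    _ = ‖f‖ * ‖g‖ * ‖h‖ := (mul_assoc _ _ _).symm

end Composition

variable {E : Type*} [NormedAddCommGroup E] [InnerProductSpace ℝ E]

theorem inner_le_inner_of_le {S T : E →L[ℝ] E} (h : S ≤ T) (x : E) : ⟪S x, x⟫ ≤ ⟪T x, x⟫ := by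
  have := ((le_def S T).mp h).inner_nonneg_left x
  rwa [sub_apply, inner_sub_left, sub_nonneg] at this

theorem IsPositive.inner_sq_le {S : E →L[ℝ] E} (hS : S.IsPositive) (x y : E) :
    ⟪S x, y⟫ ^ 2 ≤ ⟪S x, x⟫ * ⟪S y, y⟫ := by
  have hsymm : ⟪S y, x⟫ = ⟪S x, y⟫ := by
    rw [hS.inner_left_eq_inner_right, real_inner_comm]
  have hquad : ∀ t : ℝ, 0 ≤ ⟪S x, x⟫ * (t * t) + 2 * ⟪S x, y⟫ * t + ⟪S y, y⟫ := fun t ↦ by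
    have h := hS.inner_nonneg_left (t • x + y)
    simp only [map_add, map_smul, inner_add_left, inner_add_right, real_inner_smul_left,
      real_inner_smul_right, hsymm] at h
    linarith
  have := discrim_le_zero hquad
  rw [discrim] at this
  nlinarith

theorem IsPositive.norm_sq_le_norm_inverse_mul_inner {S : E →L[ℝ] E} (hS : S.IsPositive)
    (hU : IsUnit S) (x : E) : ‖x‖ ^ 2 ≤ ‖Ring.inverse S‖ * ⟪S x, x⟫ := by
  set y := Ring.inverse S x
  have hSy : S y = x := congr($(Ring.mul_inverse_cancel S hU) x)
  have hcs : (‖x‖ ^ 2) ^ 2 ≤ ⟪x, y⟫ * ⟪S x, x⟫ := by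
    have := hS.inner_sq_le y x
    rwa [hSy, real_inner_self_eq_norm_sq] at this
  have hxy : ⟪x, y⟫ ≤ ‖Ring.inverse S‖ * ‖x‖ ^ 2 :=
    calc ⟪x, y⟫ ≤ ‖x‖ * ‖y‖ := real_inner_le_norm x y
      _ ≤ ‖x‖ * (‖Ring.inverse S‖ * ‖x‖) := by gcongr; exact le_opNorm _ _
      _ = ‖Ring.inverse S‖ * ‖x‖ ^ 2 := by ring
  have hSx := hS.inner_nonneg_left x
  rcases (sq_nonneg ‖x‖).eq_or_lt with hx | hx
  · rw [← hx]; positivity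
  · nlinarith [mul_le_mul_of_nonneg_right hxy hSx]

theorem norm_inverse_le_of_le {S T : E →L[ℝ] E} (hS : 0 ≤ S) (hU : IsUnit S) (hST : S ≤ T) :
    ‖Ring.inverse T‖ ≤ ‖Ring.inverse S‖ := by
  by_cases hT : IsUnit T
  swap
  · rw [Ring.inverse_non_unit T hT, norm_zero]; exact norm_nonneg _
  refine opNorm_le_bound _ (norm_nonneg _) fun x ↦ ?_
  set y := Ring.inverse T x
  have hTy : T y = x := congr($(Ring.mul_inverse_cancel T hT) x)
  have hy : ‖y‖ ^ 2 ≤ ‖Ring.inverse S‖ * (‖x‖ * ‖y‖) :=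
    calc ‖y‖ ^ 2 ≤ ‖Ring.inverse S‖ * ⟪S y, y⟫ :=
          ((nonneg_iff_isPositive S).mp hS).norm_sq_le_norm_inverse_mul_inner hU y
      _ ≤ ‖Ring.inverse S‖ * ⟪T y, y⟫ := by gcongr; exact inner_le_inner_of_le hST y
      _ ≤ ‖Ring.inverse S‖ * (‖x‖ * ‖y‖) := by
          gcongr; rw [hTy]; exact real_inner_le_norm x y
  rcases (norm_nonneg y).eq_or_lt with hy0 | hy0
  · rw [← hy0]; positivity
  · nlinarith

theorem isUnit_of_forall_inner_pos [FiniteDimensional ℝ E] {T : E →L[ℝ] E}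
    (hT : ∀ x, x ≠ 0 → 0 < ⟪T x, x⟫) : IsUnit T := by
  have hinj : Function.Injective T := (injective_iff_map_eq_zero T).mpr fun x hx ↦ by
    by_contra hx0
    simpa [hx] using hT x hx0
  exact isUnit_iff_bijective.mpr ⟨hinj, LinearMap.injective_iff_surjective.mp hinj⟩

theorem isUnit_of_le [FiniteDimensional ℝ E] {S T : E →L[ℝ] E} (hS : 0 ≤ S) (hU : IsUnit S)
    (hST : S ≤ T) : IsUnit T := by
  refine isUnit_of_forall_inner_pos fun x hx ↦ ?_
  have := ((nonneg_iff_isPositive S).mp hS).norm_sq_le_norm_inverse_mul_inner hU x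
  have := inner_le_inner_of_le hST x
  nlinarith [norm_pos_iff.mpr hx, norm_nonneg (Ring.inverse S)]

end ContinuousLinearMap

section Fop

variable {X Y : Type*} [NormedAddCommGroup X] [InnerProductSpace ℝ X] [CompleteSpace X]
  [NormedAddCommGroup Y] [InnerProductSpace ℝ Y] [FiniteDimensional ℝ Y]
  (A M : X →L[ℝ] Y) (C₀ : X →L[ℝ] X) (Γ : Y →L[ℝ] Y)

noncomputable def innovationCov (B : X →L[ℝ] X) (δ : ℝ) : Y →L[ℝ] Y :=
  Γ + δ ^ 2 • (M ∘L B ∘L adjoint M) + A ∘L C₀ ∘L adjoint A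

theorem Fop_sub_Fop (B₁ B₂ : X →L[ℝ] X) (δ : ℝ) :
    Fop A M C₀ Γ B₁ δ - Fop A M C₀ Γ B₂ δ = (C₀ ∘L adjoint A) ∘L
      (Ring.inverse (innovationCov A M C₀ Γ B₂ δ) - Ring.inverse (innovationCov A M C₀ Γ B₁ δ))
        ∘L (A ∘L C₀) := by
  ext x
  simp only [Fop, innovationCov, sub_apply, comp_apply, map_sub]
  abel

theorem innovationCov_sub_innovationCov (B₁ B₂ : X →L[ℝ] X) (δ : ℝ) :
    innovationCov A M C₀ Γ B₁ δ - innovationCov A M C₀ Γ B₂ δ =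
      δ ^ 2 • (M ∘L (B₁ - B₂) ∘L adjoint M) := by
  simp only [innovationCov, comp_sub, sub_comp, smul_sub]
  abel

theorem le_innovationCov {B : X →L[ℝ] X} (hB : B.IsPositive) (δ : ℝ) :
    Γ + A ∘L C₀ ∘L adjoint A ≤ innovationCov A M C₀ Γ B δ := by
  rw [le_def, innovationCov, add_right_comm, add_sub_cancel_left]
  exact (hB.conj_adjoint M).smul_of_nonneg (sq_nonneg δ)

theorem isUnit_innovationCov_and_norm_inverse_le {C₀ : X →L[ℝ] X} {Γ : Y →L[ℝ] Y}
    (hC₀ : C₀.IsPositive) (hΓ : Γ.IsPositive) (hΓpos : ∀ y : Y, y ≠ 0 → 0 < ⟪Γ y, y⟫)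
    {B : X →L[ℝ] X} (hB : B.IsPositive) (δ : ℝ) :
    IsUnit (innovationCov A M C₀ Γ B δ) ∧
      ‖Ring.inverse (innovationCov A M C₀ Γ B δ)‖ ≤
        ‖Ring.inverse (Γ + A ∘L C₀ ∘L adjoint A)‖ := by
  have hQ : (A ∘L C₀ ∘L adjoint A).IsPositive := hC₀.conj_adjoint A
  have hS : 0 ≤ Γ + A ∘L C₀ ∘L adjoint A := (nonneg_iff_isPositive _).mpr (hΓ.add hQ)
  have hΓS : Γ ≤ Γ + A ∘L C₀ ∘L adjoint A := by rwa [le_def, add_sub_cancel_left]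
  have hSU : IsUnit (Γ + A ∘L C₀ ∘L adjoint A) := isUnit_of_forall_inner_pos fun y hy ↦
    (hΓpos y hy).trans_le (inner_le_inner_of_le hΓS y)
  have hST := le_innovationCov A M C₀ Γ hB δ
  exact ⟨isUnit_of_le hS hSU hST, norm_inverse_le_of_le hS hSU hST⟩

theorem norm_Fop_sub_Fop_le {B₁ B₂ : X →L[ℝ] X} {δ : ℝ}
    (hU : IsUnit (innovationCov A M C₀ Γ B₂ δ) ↔ IsUnit (innovationCov A M C₀ Γ B₁ δ)) :
    ‖Fop A M C₀ Γ B₁ δ - Fop A M C₀ Γ B₂ δ‖ ≤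
      (‖C₀‖ * ‖A‖ * ‖M‖ * δ) ^ 2 * ‖Ring.inverse (innovationCov A M C₀ Γ B₁ δ)‖ *
        ‖Ring.inverse (innovationCov A M C₀ Γ B₂ δ)‖ * ‖B₁ - B₂‖ := by
  set R₁ := Ring.inverse (innovationCov A M C₀ Γ B₁ δ)
  set R₂ := Ring.inverse (innovationCov A M C₀ Γ B₂ δ)
  have hR : R₂ - R₁ = R₂ ∘L (δ ^ 2 • (M ∘L (B₁ - B₂) ∘L adjoint M)) ∘L R₁ := by
    rw [Ring.inverse_sub_inverse hU, innovationCov_sub_innovationCov]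
    rfl
  have hA : ‖adjoint A‖ = ‖A‖ := LinearIsometryEquiv.norm_map adjoint A
  have hM : ‖adjoint M‖ = ‖M‖ := LinearIsometryEquiv.norm_map adjoint M
  calc ‖Fop A M C₀ Γ B₁ δ - Fop A M C₀ Γ B₂ δ‖
      ≤ ‖C₀ ∘L adjoint A‖ * ‖R₂ - R₁‖ * ‖A ∘L C₀‖ := by
        rw [Fop_sub_Fop]; exact opNorm_comp_comp_le _ _ _
    _ ≤ (‖C₀‖ * ‖A‖) * (‖R₂‖ * (δ ^ 2 * (‖M‖ * ‖B₁ - B₂‖ * ‖M‖)) * ‖R₁‖) * (‖A‖ * ‖C₀‖) := by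
        rw [hR]
        gcongr
        · exact (opNorm_comp_le _ _).trans_eq (by rw [hA])
        · refine (opNorm_comp_comp_le _ _ _).trans ?_
          gcongr
          refine (opNorm_smul_le _ _).trans ?_
          rw [Real.norm_of_nonneg (sq_nonneg δ)]
          gcongr
          exact (opNorm_comp_comp_le _ _ _).trans_eq (by rw [hM])
        · exact opNorm_comp_le _ _
    _ = (‖C₀‖ * ‖A‖ * ‖M‖ * δ) ^ 2 * ‖R₁‖ * ‖R₂‖ * ‖B₁ - B₂‖ := by ring

end Fop

theorem stmt_2_general {X Y : Type*}
    [NormedAddCommGroup X] [InnerProductSpace ℝ X] [CompleteSpace X]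
    [NormedAddCommGroup Y] [InnerProductSpace ℝ Y] [FiniteDimensional ℝ Y]
    (A M : X →L[ℝ] Y) (C₀ : X →L[ℝ] X) (Γ : Y →L[ℝ] Y)
    (hC₀ : C₀.IsPositive) (hΓ : Γ.IsPositive)
    (hΓpos : ∀ y : Y, y ≠ 0 → 0 < ⟪Γ y, y⟫)
    (β : ℝ)
    (hβ : β = ‖C₀‖ * ‖A‖ * ‖Ring.inverse (Γ + A ∘L C₀ ∘L adjoint A)‖ * ‖M‖)
    (δ : ℝ)
    (B₁ B₂ : X →L[ℝ] X) (hB₁ : B₁.IsPositive) (hB₂ : B₂.IsPositive) :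
    ‖Fop A M C₀ Γ B₁ δ - Fop A M C₀ Γ B₂ δ‖ ≤ (β * δ) ^ 2 * ‖B₁ - B₂‖ := by
  obtain ⟨hU₁, hR₁⟩ := isUnit_innovationCov_and_norm_inverse_le A M hC₀ hΓ hΓpos hB₁ δ
  obtain ⟨hU₂, hR₂⟩ := isUnit_innovationCov_and_norm_inverse_le A M hC₀ hΓ hΓpos hB₂ δ
  set r := ‖Ring.inverse (Γ + A ∘L C₀ ∘L adjoint A)‖
  calc ‖Fop A M C₀ Γ B₁ δ - Fop A M C₀ Γ B₂ δ‖
      ≤ (‖C₀‖ * ‖A‖ * ‖M‖ * δ) ^ 2 * ‖Ring.inverse (innovationCov A M C₀ Γ B₁ δ)‖ *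
          ‖Ring.inverse (innovationCov A M C₀ Γ B₂ δ)‖ * ‖B₁ - B₂‖ :=
        norm_Fop_sub_Fop_le A M C₀ Γ (iff_of_true hU₂ hU₁)
    _ ≤ (‖C₀‖ * ‖A‖ * ‖M‖ * δ) ^ 2 * r * r * ‖B₁ - B₂‖ := by gcongr
    _ = (β * δ) ^ 2 * ‖B₁ - B₂‖ := by rw [hβ]; ring

/-- With `β = ‖C₀‖·‖A‖·‖(Γ + A C₀ A*)⁻¹‖·‖M‖`, for every `δ ≥ 0` and all bounded self-adjoint
non-negative `B₁, B₂ : X → X`, `‖F(B₁,δ) − F(B₂,δ)‖ ≤ (βδ)² ‖B₁ − B₂‖`; in particular for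
`δ < 1/β` the map `B ↦ F(B,δ)` is a contraction on the self-adjoint non-negative operators. -/
theorem stmt_2 {X Y : Type*}
    [NormedAddCommGroup X] [InnerProductSpace ℝ X] [CompleteSpace X]
    [NormedAddCommGroup Y] [InnerProductSpace ℝ Y] [FiniteDimensional ℝ Y]
    (A M : X →L[ℝ] Y) (C₀ : X →L[ℝ] X) (Γ : Y →L[ℝ] Y)
    (hC₀ : C₀.IsPositive) (hΓ : Γ.IsPositive)
    (hΓpos : ∀ y : Y, y ≠ 0 → 0 < ⟪Γ y, y⟫)
    (β : ℝ)
    (hβ : β = ‖C₀‖ * ‖A‖ * ‖Ring.inverse (Γ + A ∘L C₀ ∘L adjoint A)‖ * ‖M‖)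
    (δ : ℝ) (hδ : 0 ≤ δ)
    (B₁ B₂ : X →L[ℝ] X) (hB₁ : B₁.IsPositive) (hB₂ : B₂.IsPositive) :
    ‖Fop A M C₀ Γ B₁ δ - Fop A M C₀ Γ B₂ δ‖ ≤ (β * δ) ^ 2 * ‖B₁ - B₂‖ :=
  stmt_2_general A M C₀ Γ hC₀ hΓ hΓpos β hβ δ B₁ B₂ hB₁ hB₂
end

section
/- Define the exact posterior covariance C_post = C₀ − C₀A*(Γ + AC₀A*)⁻¹AC₀. Then for every bounded self-adjoint non-negative operator B : X → X and every δ ∈ ℝ one has C_post ≤ F(B,δ) in the sense of quadratic forms (i.e. F(B,δ) − C_post is non-negative). Consequently, any bounded self-adjoint non-negative fixed point C(δ) of F(·,δ) satisfies C(δ) ≥ C_post; in particular, if C₀ is positive and Γ is positive definite so that C_post is positive, then the limiting covariance C(δ) remains positive (non-degenerate). -/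
/-!
Write `S = Γ + A C₀ A*` and `D = δ² M B M*`, so that
`F(B,δ) − C_post = (C₀ A*) (S⁻¹ − (S + D)⁻¹) (C₀ A*)*`. Both `S` and `S + D` are
invertible because their quadratic forms dominate that of `Γ` and `Y` is finite-dimensional.
Operator inversion is antitone: with `P = S⁻¹ − (S + D)⁻¹` one has
`P = P S P + (S + D)⁻¹ D (S + D)⁻¹`, a sum of two non-negative operators. A fixed point `C`
of `F(·,δ)` is then `F(C,δ) ≥ C_post`, and positivity of `C_post` passes to `C`.
-/

open ContinuousLinearMap
open scoped RealInnerProductSpace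

/-- The exact posterior covariance `C_post = C₀ − C₀ A* (Γ + A C₀ A*)⁻¹ A C₀`. -/
noncomputable def Cpost {X Y : Type*}
    [NormedAddCommGroup X] [InnerProductSpace ℝ X] [CompleteSpace X]
    [NormedAddCommGroup Y] [InnerProductSpace ℝ Y] [FiniteDimensional ℝ Y]
    (A : X →L[ℝ] Y) (C₀ : X →L[ℝ] X) (Γ : Y →L[ℝ] Y) : X →L[ℝ] X :=
  C₀ - (C₀ ∘L (adjoint A) ∘L
    Ring.inverse (Γ + A ∘L C₀ ∘L adjoint A)) ∘L A ∘L C₀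

open scoped Ring

theorem Ring.inverse_sub_inverse_eq {R : Type*} [Ring R] {s t : R} (hs : IsUnit s)
    (ht : IsUnit t) :
    s⁻¹ʳ - t⁻¹ʳ = (s⁻¹ʳ - t⁻¹ʳ) * s * (s⁻¹ʳ - t⁻¹ʳ) + t⁻¹ʳ * (t - s) * t⁻¹ʳ := by
  have h₁ := Ring.mul_inverse_cancel s hs
  have h₂ := Ring.inverse_mul_cancel s hs
  have h₃ := Ring.mul_inverse_cancel t ht
  simp only [sub_mul, mul_sub, mul_assoc, h₁, h₃, mul_one]
  simp only [← mul_assoc, h₂, one_mul]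
  abel

namespace ContinuousLinearMap

variable {𝕜 E : Type*} [RCLike 𝕜] [NormedAddCommGroup E] [InnerProductSpace 𝕜 E]

theorem isUnit_of_inner_ne_zero [FiniteDimensional 𝕜 E] {S : E →L[𝕜] E}
    (h : ∀ y, y ≠ 0 → inner 𝕜 (S y) y ≠ 0) : IsUnit S := by
  have := FiniteDimensional.complete 𝕜 E
  rw [isUnit_iff_isUnit_toLinearMap, LinearMap.isUnit_iff_ker_eq_bot, LinearMap.ker_eq_bot']
  intro y hy
  by_contra hne
  exact h y hne (by simp [← coe_coe, hy])

theorem IsPositive.ringInverse_sub_ringInverse_add [CompleteSpace E] {S D : E →L[𝕜] E}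
    (hS : S.IsPositive) (hD : D.IsPositive) (hSu : IsUnit S) (hSDu : IsUnit (S + D)) :
    (S⁻¹ʳ - (S + D)⁻¹ʳ).IsPositive := by
  have hT : IsSelfAdjoint (S + D)⁻¹ʳ := (hS.isSelfAdjoint.add hD.isSelfAdjoint).ringInverse
  have hP : IsSelfAdjoint (S⁻¹ʳ - (S + D)⁻¹ʳ) := hS.isSelfAdjoint.ringInverse.sub hT
  have h₁ := hS.adjoint_conj (S⁻¹ʳ - (S + D)⁻¹ʳ)
  have h₂ := hD.adjoint_conj (S + D)⁻¹ʳ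
  rw [hP.adjoint_eq] at h₁
  rw [hT.adjoint_eq] at h₂
  rw [Ring.inverse_sub_inverse_eq hSu hSDu, add_sub_cancel_left]
  exact h₁.add h₂

end ContinuousLinearMap

section Posterior

variable {X Y : Type*}
    [NormedAddCommGroup X] [InnerProductSpace ℝ X] [CompleteSpace X]
    [NormedAddCommGroup Y] [InnerProductSpace ℝ Y] [FiniteDimensional ℝ Y]
    (A M : X →L[ℝ] Y) {C₀ : X →L[ℝ] X} {Γ : Y →L[ℝ] Y} {B : X →L[ℝ] X}

theorem Fop_sub_Cpost_eq (hC₀ : IsSelfAdjoint C₀) (δ : ℝ) :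
    Fop A M C₀ Γ B δ - Cpost A C₀ Γ =
      (C₀ ∘L adjoint A) ∘L
        ((Γ + A ∘L C₀ ∘L adjoint A)⁻¹ʳ -
          (Γ + A ∘L C₀ ∘L adjoint A + δ ^ 2 • (M ∘L B ∘L adjoint M))⁻¹ʳ) ∘L
        adjoint (C₀ ∘L adjoint A) := by
  rw [adjoint_comp, adjoint_adjoint, hC₀.adjoint_eq, Fop, Cpost, add_right_comm Γ]
  ext x
  simp only [sub_apply, comp_apply, map_sub]
  abel

theorem isPositive_Fop_sub_Cpost (hC₀ : C₀.IsPositive) (hΓ : Γ.IsPositive)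
    (hΓpos : ∀ y : Y, y ≠ 0 → 0 < ⟪Γ y, y⟫) (hB : B.IsPositive) (δ : ℝ) :
    (Fop A M C₀ Γ B δ - Cpost A C₀ Γ).IsPositive := by
  have hdef (T : Y →L[ℝ] Y) (hT : T.IsPositive) (y : Y) (hy : y ≠ 0) : ⟪(Γ + T) y, y⟫ ≠ 0 := by
    rw [add_apply, inner_add_left]
    exact (add_pos_of_pos_of_nonneg (hΓpos y hy) (hT.inner_nonneg_left y)).ne'
  have hACA := hC₀.conj_adjoint A
  have hD := (hB.conj_adjoint M).smul_of_nonneg (sq_nonneg δ)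
  rw [Fop_sub_Cpost_eq A M hC₀.isSelfAdjoint δ]
  refine IsPositive.conj_adjoint ?_ _
  refine (hΓ.add hACA).ringInverse_sub_ringInverse_add hD
    (isUnit_of_inner_ne_zero (hdef _ hACA)) (isUnit_of_inner_ne_zero ?_)
  rw [add_assoc]
  exact hdef _ (hACA.add hD)

end Posterior

/-- `C_post ≤ F(B,δ)` in the sense of quadratic forms; consequently any self-adjoint
non-negative fixed point `C(δ)` of `F(·,δ)` satisfies `C(δ) ≥ C_post`, and if `C_post` is
positive definite then so is `C(δ)`. -/
theorem stmt_4 {X Y : Type*}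
    [NormedAddCommGroup X] [InnerProductSpace ℝ X] [CompleteSpace X]
    [NormedAddCommGroup Y] [InnerProductSpace ℝ Y] [FiniteDimensional ℝ Y]
    (A M : X →L[ℝ] Y) (C₀ : X →L[ℝ] X) (Γ : Y →L[ℝ] Y)
    (hC₀ : C₀.IsPositive) (hΓ : Γ.IsPositive)
    (hΓpos : ∀ y : Y, y ≠ 0 → 0 < ⟪Γ y, y⟫) :
    (∀ (B : X →L[ℝ] X), B.IsPositive → ∀ δ : ℝ,
        (Fop A M C₀ Γ B δ - Cpost A C₀ Γ).IsPositive) ∧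
    (∀ (C : X →L[ℝ] X) (δ : ℝ), C.IsPositive → Fop A M C₀ Γ C δ = C →
        (C - Cpost A C₀ Γ).IsPositive) ∧
    (∀ (C : X →L[ℝ] X) (δ : ℝ), C.IsPositive → Fop A M C₀ Γ C δ = C →
        (∀ x : X, x ≠ 0 → 0 < ⟪Cpost A C₀ Γ x, x⟫) →
        ∀ x : X, x ≠ 0 → 0 < ⟪C x, x⟫) := by
  have hpost (B : X →L[ℝ] X) (hB : B.IsPositive) := isPositive_Fop_sub_Cpost A M hC₀ hΓ hΓpos hB
  have hfix (C : X →L[ℝ] X) (δ : ℝ) (hC : C.IsPositive) (h : Fop A M C₀ Γ C δ = C) :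
      (C - Cpost A C₀ Γ).IsPositive := h ▸ hpost C hC δ
  refine ⟨hpost, hfix, fun C δ hC h hCpost x hx => ?_⟩
  have hle := (hfix C δ hC h).inner_nonneg_left x
  rw [sub_apply, inner_sub_left, sub_nonneg] at hle
  exact (hCpost x hx).trans_le hle
end
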